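/- arXiv:2509.15624 — 6 statements merged into one kernel-verified Lean document; each statement's English description precedes it below -/
import Mathlib

section
/- Let (X, D) be a metric space and f : X → X a generalized contraction of type (I) all of whose orbits are bounded. Let x ∈ X and set x_n = f^n x for n ∈ ℕ. If x_n ≠ x_{n+1} for every n ∈ ℕ, then the sequence of orbit diameters D_f(x_n) converges to 0 as n → ∞. -/
open Metric Filter

/-- The orbit of `x` under `f`: the set of iterates `f^[n] x`, `n ≥ 0`. -/
def orbit {X : Type*} (f : X → X) (x : X) : Set X := Set.range fun n => f^[n] x

/-- `D_f(x)`: the diameter of the orbit of `x`. -/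
noncomputable def Df {X : Type*} [MetricSpace X] (f : X → X) (x : X) : ℝ :=
  Metric.diam (orbit f x)

/-- `D_f(x,y)`: the diameter of the union of the orbits of `x` and `y`. -/
noncomputable def Df2 {X : Type*} [MetricSpace X] (f : X → X) (x y : X) : ℝ :=
  Metric.diam (orbit f x ∪ orbit f y)

/-- `M_f(x,y) = (D_f(x) + D_f(y)) / 2`. -/
noncomputable def Mf {X : Type*} [MetricSpace X] (f : X → X) (x y : X) : ℝ :=
  (Df f x + Df f y) / 2

/-- The class `Φ`: φ maps `[0,∞)` to `[0,∞)`, `φ 0 = 0`, `φ t < t` for `t > 0`, and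
for every `ε > 0` there is `d > 0` with `ε < t < ε + d → φ t ≤ ε`. -/
def MemPhi (φ : ℝ → ℝ) : Prop :=
  φ 0 = 0 ∧ (∀ t, 0 ≤ t → 0 ≤ φ t) ∧ (∀ t, 0 < t → φ t < t) ∧
    ∀ ε, 0 < ε → ∃ d, 0 < d ∧ ∀ t, ε < t → t < ε + d → φ t ≤ ε

/-- Generalized contraction of type (I). -/
def GenContractionI {X : Type*} [MetricSpace X] (f : X → X) : Prop :=
  ∃ φ : ℝ → ℝ, ∃ α β γ : ℝ, MemPhi φ ∧ 0 < α ∧ 0 < β ∧ 0 < γ ∧ α + β + γ < 1 ∧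
    ∀ x y, f x ≠ x → f y ≠ y →
      dist (f x) (f y) ≤ φ (Df f x) ^ α * φ (Df f y) ^ β *
        φ (Df2 f x y) ^ γ * φ (Mf f x y) ^ (1 - (α + β + γ))

/-- Generalized contraction of type (II). -/
def GenContractionII {X : Type*} [MetricSpace X] (f : X → X) : Prop :=
  ∃ φ : ℝ → ℝ, ∃ α β γ δ : ℝ, MemPhi φ ∧ 0 ≤ α ∧ 0 ≤ β ∧ 0 ≤ γ ∧ 0 ≤ δ ∧
    α + β + γ + δ ≤ 1 ∧
    ∀ x y, dist (f x) (f y) ≤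
      α * φ (Df f x) + β * φ (Df f y) + γ * φ (Df2 f x y) + δ * φ (Mf f x y)

/-- Generalized contraction of type (III). -/
def GenContractionIII {X : Type*} [MetricSpace X] (f : X → X) : Prop :=
  ∃ φ : ℝ → ℝ, MemPhi φ ∧
    ∀ x y, dist (f x) (f y) ≤
      max (max (φ (Df f x)) (φ (Df f y))) (max (φ (Df2 f x y)) (φ (Mf f x y)))

private lemma aux_rpow_prod {a b c m K α β γ : ℝ} (hα : 0 < α) (hβ : 0 < β) (hγ : 0 < γ)
    (hs : α + β + γ < 1) (ha : 0 ≤ a) (hb : 0 ≤ b) (hc : 0 ≤ c) (hm : 0 ≤ m)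
    (hK : 0 ≤ K) (haK : a ≤ K) (hbK : b ≤ K) (hcK : c ≤ K) (hmK : m ≤ K) :
    a ^ α * b ^ β * c ^ γ * m ^ (1 - (α + β + γ)) ≤ K := by
  have he : 0 < 1 - (α + β + γ) := by linarith
  rcases hK.eq_or_lt with h | h
  · have ha0 : a = 0 := le_antisymm (haK.trans h.ge) ha
    rw [ha0, Real.zero_rpow hα.ne']
    simp [← h]
  · calc a ^ α * b ^ β * c ^ γ * m ^ (1 - (α + β + γ))
        ≤ K ^ α * K ^ β * K ^ γ * K ^ (1 - (α + β + γ)) := by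
          gcongr
      _ = K ^ (α + β + γ + (1 - (α + β + γ))) := by
          rw [Real.rpow_add h, Real.rpow_add h, Real.rpow_add h]
      _ = K := by
          rw [show α + β + γ + (1 - (α + β + γ)) = 1 by ring, Real.rpow_one]

private lemma iter_iter {X : Type*} (f : X → X) (x : X) (k n : ℕ) :
    f^[k] (f^[n + 1] x) = f (f^[n + k] x) := by
  rw [← Function.iterate_add_apply, show k + (n + 1) = (n + k) + 1 by omega,
    Function.iterate_succ_apply']

private lemma Mf_nonneg {X : Type*} [MetricSpace X] (f : X → X) (a b : X) :
    0 ≤ Mf f a b := by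
  have h1 : (0:ℝ) ≤ Metric.diam (orbit f a) := Metric.diam_nonneg
  have h2 : (0:ℝ) ≤ Metric.diam (orbit f b) := Metric.diam_nonneg
  unfold Mf Df
  linarith

/-- along a never-stabilizing iterate sequence of a type (I)
contraction, the orbit diameters tend to `0`. -/
theorem typeI_orbit_diam_tendsto_zero {X : Type*} [MetricSpace X]
    (f : X → X) (hb : ∀ x, Bornology.IsBounded (orbit f x))
    (hf : GenContractionI f) (x : X)
    (hx : ∀ n : ℕ, 1 ≤ n → f^[n] x ≠ f^[n + 1] x) :
    Filter.Tendsto (fun n : ℕ => Df f (f^[n] x)) Filter.atTop (nhds 0) := by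
  obtain ⟨φ, α, β, γ, ⟨hφ0, hφnn, hφlt, hφeps⟩, hα, hβ, hγ, hs, hcontr⟩ := hf
  -- orbits of later iterates are contained in orbits of earlier ones
  have hsub : ∀ {n m : ℕ}, n ≤ m → orbit f (f^[m] x) ⊆ orbit f (f^[n] x) := by
    intro n m hnm u hu
    simp only [orbit, Set.mem_range] at hu ⊢
    obtain ⟨i, rfl⟩ := hu
    refine ⟨i + (m - n), ?_⟩
    rw [Function.iterate_add_apply]
    congr 1
    rw [← Function.iterate_add_apply]
    congr 1
    omega
  have hdnn : ∀ n : ℕ, 0 ≤ Df f (f^[n] x) := fun n => Metric.diam_nonneg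
  have hdmono : ∀ {n m : ℕ}, n ≤ m → Df f (f^[m] x) ≤ Df f (f^[n] x) :=
    fun {n m} h => Metric.diam_mono (hsub h) (hb _)
  have hφle : ∀ {t K : ℝ}, 0 ≤ t → t ≤ K → φ t ≤ K := by
    intro t K ht htK
    rcases ht.eq_or_lt with h | h
    · rw [← h, hφ0]; linarith
    · exact (hφlt t h).le.trans htK
  have hnotfix : ∀ m : ℕ, 1 ≤ m → f (f^[m] x) ≠ f^[m] x := by
    intro m hm h
    exact hx m hm (by rw [Function.iterate_succ_apply']; exact h.symm)
  have hDf2_le : ∀ {n p q : ℕ}, n ≤ p → n ≤ q →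
      Df2 f (f^[p] x) (f^[q] x) ≤ Df f (f^[n] x) := fun {n p q} hp hq =>
    Metric.diam_mono (Set.union_subset (hsub hp) (hsub hq)) (hb _)
  have hDf2_ge : ∀ p q : ℕ, Df f (f^[p] x) ≤ Df2 f (f^[p] x) (f^[q] x) :=
    fun p q => Metric.diam_mono Set.subset_union_left ((hb _).union (hb _))
  -- the key estimate: a uniform bound on all four φ-values bounds the next diameter
  have key : ∀ (n : ℕ) (K : ℝ), 1 ≤ n → 0 ≤ K →
      (∀ p q : ℕ, n ≤ p → n ≤ q →
        φ (Df f (f^[p] x)) ≤ K ∧ φ (Df f (f^[q] x)) ≤ K ∧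
        φ (Df2 f (f^[p] x) (f^[q] x)) ≤ K ∧ φ (Mf f (f^[p] x) (f^[q] x)) ≤ K) →
      Df f (f^[n + 1] x) ≤ K := by
    intro n K hn hK hH
    apply Metric.diam_le_of_forall_dist_le hK
    intro u hu v hv
    simp only [orbit, Set.mem_range] at hu hv
    obtain ⟨i, rfl⟩ := hu
    obtain ⟨j, rfl⟩ := hv
    rw [iter_iter f x i n, iter_iter f x j n]
    obtain ⟨hA, hB, hC, hM⟩ := hH (n + i) (n + j) (by omega) (by omega)
    calc dist (f (f^[n + i] x)) (f (f^[n + j] x))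
        ≤ φ (Df f (f^[n + i] x)) ^ α * φ (Df f (f^[n + j] x)) ^ β *
          φ (Df2 f (f^[n + i] x) (f^[n + j] x)) ^ γ *
          φ (Mf f (f^[n + i] x) (f^[n + j] x)) ^ (1 - (α + β + γ)) :=
        hcontr _ _ (hnotfix _ (by omega)) (hnotfix _ (by omega))
      _ ≤ K := aux_rpow_prod hα hβ hγ hs
          (hφnn _ (hdnn _)) (hφnn _ (hdnn _))
          (hφnn _ Metric.diam_nonneg) (hφnn _ (Mf_nonneg f _ _))
          hK hA hB hC hM
  -- the limit of the (nonincreasing) orbit diameters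
  set δ : ℝ := ⨅ n : ℕ, Df f (f^[n + 1] x) with hδ
  have hbddb : BddBelow (Set.range fun n : ℕ => Df f (f^[n + 1] x)) :=
    ⟨0, by rintro _ ⟨n, rfl⟩; exact hdnn _⟩
  have hanti : Antitone fun n : ℕ => Df f (f^[n + 1] x) :=
    fun a b hab => hdmono (by omega)
  have htend : Tendsto (fun n : ℕ => Df f (f^[n + 1] x)) atTop (nhds δ) :=
    tendsto_atTop_ciInf hanti hbddb
  have hδle : ∀ n : ℕ, δ ≤ Df f (f^[n + 1] x) := fun n => ciInf_le hbddb n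
  have hδnn : 0 ≤ δ := le_ciInf fun n => hdnn _
  have hδ0 : δ = 0 := by
    by_contra h0
    have hδpos : 0 < δ := hδnn.lt_of_ne (Ne.symm h0)
    obtain ⟨d₀, hd₀, hprop⟩ := hφeps δ hδpos
    have hlt : δ < δ + d₀ := by linarith
    obtain ⟨n₀, hn₀⟩ := exists_lt_of_ciInf_lt (hδ ▸ hlt)
    set N := n₀ + 1 with hN
    have hdN : Df f (f^[N] x) < δ + d₀ := hn₀
    -- bound a single φ-value using the Φ-condition
    have hφbound : ∀ t : ℝ, 0 ≤ t → t ≤ Df f (f^[N] x) → φ t ≤ δ := by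
      intro t ht htle
      rcases le_or_gt t δ with h' | h'
      · exact hφle ht h'
      · exact hprop t h' (lt_of_le_of_lt htle hdN)
    have hMf_le : ∀ p q : ℕ, N ≤ p → N ≤ q →
        Mf f (f^[p] x) (f^[q] x) ≤ Df f (f^[N] x) := by
      intro p q hp hq
      have h1 := hdmono hp
      have h2 := hdmono hq
      unfold Mf
      linarith
    have hstep : Df f (f^[N + 1] x) ≤ δ := by
      apply key N δ (by omega) hδnn
      intro p q hp hq
      exact ⟨hφbound _ (hdnn _) (hdmono hp),
        hφbound _ (hdnn _) (hdmono hq),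
        hφbound _ Metric.diam_nonneg (hDf2_le hp hq),
        hφbound _ (Mf_nonneg f _ _) (hMf_le p q hp hq)⟩
    have hdeq : ∀ m : ℕ, N + 1 ≤ m → Df f (f^[m] x) = δ := by
      intro m hm
      refine le_antisymm ((hdmono hm).trans hstep) ?_
      obtain ⟨k, rfl⟩ : ∃ k, m = k + 1 := ⟨m - 1, by omega⟩
      exact hδle k
    have hφδ : φ δ < δ := hφlt δ hδpos
    have hfin : Df f (f^[(N + 1) + 1] x) ≤ φ δ := by
      apply key (N + 1) (φ δ) (by omega) (hφnn δ hδnn)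
      intro p q hp hq
      have hDp : Df f (f^[p] x) = δ := hdeq _ hp
      have hDq : Df f (f^[q] x) = δ := hdeq _ hq
      have hD2 : Df2 f (f^[p] x) (f^[q] x) = δ := by
        refine le_antisymm ?_ ?_
        · exact (hDf2_le hp hq).trans_eq (hdeq _ (by omega))
        · exact hDp ▸ hDf2_ge p q
      have hM : Mf f (f^[p] x) (f^[q] x) = δ := by
        unfold Mf
        rw [hDp, hDq]
        ring
      rw [hDp, hDq, hD2, hM]
      exact ⟨le_rfl, le_rfl, le_rfl, le_rfl⟩
    have : δ ≤ φ δ := (hdeq (N + 2) (by omega)) ▸ hfin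
    linarith
  rw [hδ0] at htend
  exact (tendsto_add_atTop_iff_nat 1).mp htend
end

section
/- Let (X, D) be a metric space and f : X → X a generalized contraction of type (I) all of whose orbits are bounded. Let x, y ∈ X and set x_n = f^n x and y_n = f^n y for n ∈ ℕ. Suppose x_n ≠ x_{n+1} and y_n ≠ y_{n+1} for every n ∈ ℕ (so that D_f(x_n) → 0 and D_f(y_n) → 0). Then the joint orbit diameters D_f(x_n, y_n) converge to 0 as n → ∞. -/
open Metric Filter

lemma iterate_mem_orbit_of_le {X : Type*} (f : X → X) (x : X) {n m : ℕ} (h : n ≤ m) :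
    f^[m] x ∈ orbit f (f^[n] x) :=
  ⟨m - n, by simp only []; rw [← Function.iterate_add_apply, Nat.sub_add_cancel h]⟩

lemma orbit_iterate_subset {X : Type*} (f : X → X) (x : X) {n m : ℕ} (h : n ≤ m) :
    orbit f (f^[m] x) ⊆ orbit f (f^[n] x) := by
  rintro u ⟨k, rfl⟩
  refine ⟨k + (m - n), ?_⟩
  simp only []
  rw [Function.iterate_add_apply, ← Function.iterate_add_apply f (m - n) n, Nat.sub_add_cancel h]

lemma exists_decomp {X : Type*} (f : X → X) (x : X) (n : ℕ) {u : X}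
    (hu : u ∈ orbit f (f^[n+1] x)) : ∃ m, n ≤ m ∧ u = f (f^[m] x) := by
  obtain ⟨i, rfl⟩ := hu
  refine ⟨n + i, Nat.le_add_right _ _, ?_⟩
  show f^[i] (f^[n+1] x) = f (f^[n+i] x)
  rw [← Function.iterate_add_apply, show i + (n+1) = (n+i)+1 by omega,
    Function.iterate_succ_apply']

lemma not_fixed {X : Type*} {f : X → X} {x : X}
    (hx : ∀ n : ℕ, 1 ≤ n → f^[n] x ≠ f^[n + 1] x) {m : ℕ} (hm : 1 ≤ m) :
    f (f^[m] x) ≠ f^[m] x := by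
  intro h
  exact hx m hm (by rw [Function.iterate_succ_apply']; exact h.symm)

lemma rpow_prod_le {a b c m A B C M α β γ δ : ℝ}
    (ha : 0 ≤ a) (hb : 0 ≤ b) (hc : 0 ≤ c) (hm : 0 ≤ m)
    (hA : a ≤ A) (hB : b ≤ B) (hC : c ≤ C) (hM : m ≤ M)
    (hα : 0 ≤ α) (hβ : 0 ≤ β) (hγ : 0 ≤ γ) (hδ : 0 ≤ δ) :
    a ^ α * b ^ β * c ^ γ * m ^ δ ≤ A ^ α * B ^ β * C ^ γ * M ^ δ := by
  have hA0 : 0 ≤ A := ha.trans hA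
  have hB0 : 0 ≤ B := hb.trans hB
  have hC0 : 0 ≤ C := hc.trans hC
  have hM0 : 0 ≤ M := hm.trans hM
  gcongr <;> first | assumption | positivity

lemma rpow_combo {K α β γ : ℝ} (hK : 0 ≤ K) (hα : 0 < α) (hβ : 0 < β) (hγ : 0 < γ)
    (hlam : α + β + γ < 1) :
    K ^ α * K ^ β * K ^ γ * K ^ (1 - (α + β + γ)) = K := by
  rw [← Real.rpow_add' hK (by positivity), ← Real.rpow_add' hK (by positivity),
    ← Real.rpow_add' hK (by intro h; apply (one_ne_zero : (1:ℝ) ≠ 0); linarith),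
    show α + β + γ + (1 - (α + β + γ)) = 1 by ring, Real.rpow_one]

lemma phi_le_self {φ : ℝ → ℝ} (hφ0 : φ 0 = 0) (hφlt : ∀ t, 0 < t → φ t < t)
    {t : ℝ} (ht : 0 ≤ t) : φ t ≤ t := by
  rcases eq_or_lt_of_le ht with h | h
  · rw [← h, hφ0]
  · exact (hφlt t h).le

lemma Df_iterate_tendsto_zero {X : Type*} [MetricSpace X] {f : X → X}
    (hb : ∀ x, Bornology.IsBounded (orbit f x)) (hf : GenContractionI f) (x : X)
    (hx : ∀ n : ℕ, 1 ≤ n → f^[n] x ≠ f^[n + 1] x) :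
    Tendsto (fun n : ℕ => Df f (f^[n] x)) atTop (nhds 0) := by
  obtain ⟨φ, α, β, γ, ⟨hφ0, hφnn, hφlt, hφeps⟩, hα, hβ, hγ, hlam, hcon⟩ := hf
  set d : ℕ → ℝ := fun n => Df f (f^[n] x) with hd
  have hdnn : ∀ n, 0 ≤ d n := fun n => Metric.diam_nonneg
  have hant : Antitone d := antitone_nat_of_succ_le fun n =>
    Metric.diam_mono (orbit_iterate_subset f x (Nat.le_succ n)) (hb _)
  have hbdd : BddBelow (Set.range d) := ⟨0, by rintro _ ⟨n, rfl⟩; exact hdnn n⟩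
  have htend : Tendsto d atTop (nhds (⨅ n, d n)) := tendsto_atTop_ciInf hant hbdd
  set L := ⨅ n, d n with hLdef
  have hLle : ∀ n, L ≤ d n := fun n => ciInf_le hbdd n
  have hL0 : 0 ≤ L := le_ciInf hdnn
  have hLz : L = 0 := by
    by_contra hne
    have hL : 0 < L := lt_of_le_of_ne hL0 (Ne.symm hne)
    obtain ⟨δ, hδ, hδp⟩ := hφeps L hL
    have hφle : ∀ t, L ≤ t → t < L + δ → φ t ≤ L := by
      intro t h1 h2
      rcases eq_or_lt_of_le h1 with rfl | h
      · exact (hφlt L hL).le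
      · exact hδp t h h2
    -- Step (ii): one more iterate brings the diameter down to L
    have key2 : ∀ n, 1 ≤ n → d n < L + δ → d (n + 1) ≤ L := by
      intro n hn hlt
      show Df f (f^[n+1] x) ≤ L
      apply Metric.diam_le_of_forall_dist_le hL0
      intro u hu v hv
      obtain ⟨m, hm, rfl⟩ := exists_decomp f x n hu
      obtain ⟨m', hm', rfl⟩ := exists_decomp f x n hv
      have hmain := hcon _ _ (not_fixed hx (hn.trans hm)) (not_fixed hx (hn.trans hm'))
      have hbu : Bornology.IsBounded (orbit f (f^[m] x) ∪ orbit f (f^[m'] x)) :=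
        (hb _).union (hb _)
      have hdm : d m ≤ d n := hant hm
      have hdm' : d m' ≤ d n := hant hm'
      have b1 : φ (Df f (f^[m] x)) ≤ L := hφle _ (hLle m) (lt_of_le_of_lt hdm hlt)
      have b2 : φ (Df f (f^[m'] x)) ≤ L := hφle _ (hLle m') (lt_of_le_of_lt hdm' hlt)
      have hC1 : L ≤ Df2 f (f^[m] x) (f^[m'] x) :=
        (hLle m).trans (Metric.diam_mono Set.subset_union_left hbu)
      have hC2 : Df2 f (f^[m] x) (f^[m'] x) ≤ d n :=
        Metric.diam_mono (Set.union_subset (orbit_iterate_subset f x hm)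
          (orbit_iterate_subset f x hm')) (hb _)
      have b3 : φ (Df2 f (f^[m] x) (f^[m'] x)) ≤ L := hφle _ hC1 (lt_of_le_of_lt hC2 hlt)
      have hM1 : L ≤ Mf f (f^[m] x) (f^[m'] x) := by
        have := hLle m; have := hLle m'
        simp only [Mf]; unfold d at *; linarith
      have hM2 : Mf f (f^[m] x) (f^[m'] x) < L + δ := by
        simp only [Mf]; unfold d at hdm hdm' hlt; linarith
      have b4 : φ (Mf f (f^[m] x) (f^[m'] x)) ≤ L := hφle _ hM1 hM2
      calc dist (f (f^[m] x)) (f (f^[m'] x)) ≤ _ := hmain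
        _ ≤ L ^ α * L ^ β * L ^ γ * L ^ (1 - (α + β + γ)) :=
            rpow_prod_le (hφnn _ Metric.diam_nonneg) (hφnn _ Metric.diam_nonneg)
              (hφnn _ Metric.diam_nonneg) (hφnn _ (le_trans hL0 hM1))
              b1 b2 b3 b4 hα.le hβ.le hγ.le (by linarith)
        _ = L := rpow_combo hL0 hα hβ hγ hlam
    obtain ⟨N, hN⟩ := Filter.eventually_atTop.mp
      (htend.eventually_lt_const (lt_add_of_pos_right L hδ))
    have hEq : ∀ m, max N 1 + 1 ≤ m → d m = L := by
      intro m hm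
      obtain ⟨k, rfl⟩ := Nat.exists_eq_add_of_le hm
      have h1 : 1 ≤ max N 1 + k := le_trans (le_max_right N 1) (Nat.le_add_right _ _)
      have h2 : d (max N 1 + k) < L + δ :=
        hN _ (le_trans (le_max_left N 1) (Nat.le_add_right _ _))
      have h3 := key2 (max N 1 + k) h1 h2
      have heq : max N 1 + 1 + k = max N 1 + k + 1 := by omega
      rw [heq]
      exact le_antisymm h3 (hLle _)
    set n := max N 1 + 1 with hn
    have hfin : d (n + 1) ≤ φ L := by
      show Df f (f^[n+1] x) ≤ φ L
      apply Metric.diam_le_of_forall_dist_le (hφnn L hL0)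
      intro u hu v hv
      obtain ⟨m, hm, rfl⟩ := exists_decomp f x n hu
      obtain ⟨m', hm', rfl⟩ := exists_decomp f x n hv
      have h1 : 1 ≤ m := le_trans (by omega) hm
      have h1' : 1 ≤ m' := le_trans (by omega) hm'
      have hmain := hcon _ _ (not_fixed hx h1) (not_fixed hx h1')
      have e1 : Df f (f^[m] x) = L := hEq m hm
      have e2 : Df f (f^[m'] x) = L := hEq m' hm'
      have e3 : Df2 f (f^[m] x) (f^[m'] x) = L := by
        apply le_antisymm
        · calc Df2 f (f^[m] x) (f^[m'] x) ≤ d n :=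
              Metric.diam_mono (Set.union_subset (orbit_iterate_subset f x hm)
                (orbit_iterate_subset f x hm')) (hb _)
            _ = L := hEq n le_rfl
        · exact e1 ▸ Metric.diam_mono Set.subset_union_left ((hb _).union (hb _))
      have e4 : Mf f (f^[m] x) (f^[m'] x) = L := by
        simp only [Mf, e1, e2]; ring
      rw [e1, e2, e3, e4] at hmain
      calc dist (f (f^[m] x)) (f (f^[m'] x)) ≤ _ := hmain
        _ = φ L := rpow_combo (hφnn L hL0) hα hβ hγ hlam
    have h5 : d (n + 1) = L := hEq (n + 1) (by omega)
    have h6 : φ L < L := hφlt L hL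
    rw [h5] at hfin
    linarith
  rw [hLz] at htend
  exact htend

/-- for two never-stabilizing iterate sequences of a type (I)
contraction, the joint orbit diameters tend to `0`. -/
theorem typeI_joint_orbit_diam_tendsto_zero {X : Type*} [MetricSpace X]
    (f : X → X) (hb : ∀ x, Bornology.IsBounded (orbit f x))
    (hf : GenContractionI f) (x y : X)
    (hx : ∀ n : ℕ, 1 ≤ n → f^[n] x ≠ f^[n + 1] x)
    (hy : ∀ n : ℕ, 1 ≤ n → f^[n] y ≠ f^[n + 1] y) :
    Filter.Tendsto (fun n : ℕ => Df2 f (f^[n] x) (f^[n] y)) Filter.atTop (nhds 0) := by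
  have hdx := Df_iterate_tendsto_zero hb hf x hx
  have hdy := Df_iterate_tendsto_zero hb hf y hy
  obtain ⟨φ, α, β, γ, ⟨hφ0, hφnn, hφlt, hφeps⟩, hα, hβ, hγ, hlam, hcon⟩ := hf
  set C0 := Df2 f (f^[1] x) (f^[1] y) with hC0def
  have hC0 : 0 ≤ C0 := Metric.diam_nonneg
  set m : ℕ → ℝ := fun n => max (Df f (f^[n] x)) (Df f (f^[n] y)) with hmdef
  have hmnn : ∀ n, 0 ≤ m n := fun n => le_trans Metric.diam_nonneg (le_max_left _ _)
  have hmt : Tendsto m atTop (nhds 0) := by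
    have := hdx.max hdy
    simpa using this
  -- key bound for mixed pairs
  have key : ∀ n, 1 ≤ n → ∀ u ∈ orbit f (f^[n+1] x), ∀ v ∈ orbit f (f^[n+1] y),
      dist u v ≤ m n ^ α * m n ^ β * C0 ^ γ * m n ^ (1 - (α + β + γ)) := by
    intro n hn u hu v hv
    obtain ⟨i, hi, rfl⟩ := exists_decomp f x n hu
    obtain ⟨j, hj, rfl⟩ := exists_decomp f y n hv
    have hmain := hcon _ _ (not_fixed hx (hn.trans hi)) (not_fixed hy (hn.trans hj))
    have hdi : Df f (f^[i] x) ≤ m n :=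
      le_trans (Metric.diam_mono (orbit_iterate_subset f x hi) (hb _)) (le_max_left _ _)
    have hdj : Df f (f^[j] y) ≤ m n :=
      le_trans (Metric.diam_mono (orbit_iterate_subset f y hj) (hb _)) (le_max_right _ _)
    have b1 : φ (Df f (f^[i] x)) ≤ m n :=
      le_trans (phi_le_self hφ0 hφlt Metric.diam_nonneg) hdi
    have b2 : φ (Df f (f^[j] y)) ≤ m n :=
      le_trans (phi_le_self hφ0 hφlt Metric.diam_nonneg) hdj
    have b3 : φ (Df2 f (f^[i] x) (f^[j] y)) ≤ C0 := by
      refine le_trans (phi_le_self hφ0 hφlt Metric.diam_nonneg) ?_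
      exact Metric.diam_mono (Set.union_subset_union
        (orbit_iterate_subset f x (hn.trans hi)) (orbit_iterate_subset f y (hn.trans hj)))
        ((hb _).union (hb _))
    have hMnn : 0 ≤ Mf f (f^[i] x) (f^[j] y) := by
      simp only [Mf]
      have := Metric.diam_nonneg (s := orbit f (f^[i] x))
      have := Metric.diam_nonneg (s := orbit f (f^[j] y))
      simp only [Df]
      linarith
    have b4 : φ (Mf f (f^[i] x) (f^[j] y)) ≤ m n := by
      refine le_trans (phi_le_self hφ0 hφlt hMnn) ?_
      simp only [Mf]
      have h1 := hdi
      have h2 := hdj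
      linarith
    calc dist (f (f^[i] x)) (f (f^[j] y)) ≤ _ := hmain
      _ ≤ m n ^ α * m n ^ β * C0 ^ γ * m n ^ (1 - (α + β + γ)) :=
          rpow_prod_le (hφnn _ Metric.diam_nonneg) (hφnn _ Metric.diam_nonneg)
            (hφnn _ Metric.diam_nonneg) (hφnn _ hMnn)
            b1 b2 b3 b4 hα.le hβ.le hγ.le (by linarith)
  -- the squeezing sequence
  have hgt : Tendsto (fun n => max (max (Df f (f^[n+1] x)) (Df f (f^[n+1] y)))
      (m n ^ α * m n ^ β * C0 ^ γ * m n ^ (1 - (α + β + γ)))) atTop (nhds 0) := by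
    have h1 : Tendsto (fun n : ℕ => Df f (f^[n+1] x)) atTop (nhds 0) :=
      hdx.comp (tendsto_add_atTop_nat 1)
    have h2 : Tendsto (fun n : ℕ => Df f (f^[n+1] y)) atTop (nhds 0) :=
      hdy.comp (tendsto_add_atTop_nat 1)
    have h3 : Tendsto (fun n => m n ^ α) atTop (nhds 0) := by
      have := hmt.rpow_const (Or.inr hα.le)
      simpa [Real.zero_rpow hα.ne'] using this
    have h4 : Tendsto (fun n => m n ^ β) atTop (nhds 0) := by
      have := hmt.rpow_const (Or.inr hβ.le)
      simpa [Real.zero_rpow hβ.ne'] using this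
    have h5 : Tendsto (fun n => m n ^ (1 - (α + β + γ))) atTop (nhds 0) := by
      have h6 : (0:ℝ) < 1 - (α + β + γ) := by linarith
      have := hmt.rpow_const (Or.inr h6.le)
      simpa [Real.zero_rpow h6.ne'] using this
    have hp : Tendsto (fun n => m n ^ α * m n ^ β * C0 ^ γ * m n ^ (1 - (α + β + γ)))
        atTop (nhds 0) := by
      have := ((h3.mul h4).mul (tendsto_const_nhds (x := C0 ^ γ))).mul h5
      simpa using this
    have := (h1.max h2).max hp
    simpa using this
  have hsq : Tendsto (fun n : ℕ => Df2 f (f^[n+1] x) (f^[n+1] y)) atTop (nhds 0) := by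
    apply squeeze_zero' (Filter.Eventually.of_forall fun n => Metric.diam_nonneg) ?_ hgt
    filter_upwards [Filter.eventually_ge_atTop 1] with n hn
    show Df2 f (f^[n+1] x) (f^[n+1] y) ≤ _
    have hg0 : (0:ℝ) ≤ max (max (Df f (f^[n+1] x)) (Df f (f^[n+1] y)))
        (m n ^ α * m n ^ β * C0 ^ γ * m n ^ (1 - (α + β + γ))) :=
      le_trans Metric.diam_nonneg ((le_max_left _ _).trans (le_max_left _ _))
    apply Metric.diam_le_of_forall_dist_le hg0
    intro u hu v hv
    rcases hu with hu | hu <;> rcases hv with hv | hv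
    · exact le_trans (Metric.dist_le_diam_of_mem (hb _) hu hv)
        ((le_max_left _ _).trans (le_max_left _ _))
    · exact le_trans (key n hn u hu v hv) (le_max_right _ _)
    · rw [dist_comm]
      exact le_trans (key n hn v hv u hu) (le_max_right _ _)
    · exact le_trans (Metric.dist_le_diam_of_mem (hb _) hu hv)
        ((le_max_right _ _).trans (le_max_left _ _))
  exact (tendsto_add_atTop_iff_nat 1).mp hsq
end

section
/- Let X = [0, ∞) with the usual metric D(s,t) = |s − t|, let a, b > 0 with a ≠ b, and define f : X → X by f x = b if x ≠ a and f a = a. Then, with φ(t) = t/2 and any α, β, γ > 0 with α + β + γ < 1, the map f is a generalized contraction of type (I) (indeed D(fx, fy) = 0 for all x, y outside the fixed point set of f), and f has two distinct fixed points, namely a and b. In particular, a generalized contraction of type (I) need not have a unique fixed point. -/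
open Metric Filter

/-- on `X = [0,∞)` (modelled as `ℝ≥0` with the usual metric), the map
`f x = b` for `x ≠ a`, `f a = a` (with `a, b > 0`, `a ≠ b`) is, with `φ(t) = t/2`,
a generalized contraction of type (I) (indeed `D(fx,fy) = 0` off the fixed point
set), and it has the two distinct fixed points `a` and `b`. -/
theorem example_typeI_two_fixedPoints (a b : NNReal) (ha : 0 < a) (hb : 0 < b)
    (hab : a ≠ b) (f : NNReal → NNReal) (hfdef : ∀ x, f x = if x = a then a else b)
    (φ : ℝ → ℝ) (hφdef : ∀ t, φ t = t / 2) :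
    MemPhi φ ∧
    (∀ α β γ : ℝ, 0 < α → 0 < β → 0 < γ → α + β + γ < 1 →
      ∀ x y, f x ≠ x → f y ≠ y →
        dist (f x) (f y) ≤ φ (Df f x) ^ α * φ (Df f y) ^ β *
          φ (Df2 f x y) ^ γ * φ (Mf f x y) ^ (1 - (α + β + γ))) ∧
    (∀ x y, f x ≠ x → f y ≠ y → dist (f x) (f y) = 0) ∧
    f a = a ∧ f b = b ∧ a ≠ b := by
  have hfix : ∀ x : NNReal, f x ≠ x → f x = b := by
    intro x hx
    rw [hfdef] at hx ⊢
    split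
    · rename_i h; subst h; simp at hx
    · rfl
  have hdist0 : ∀ x y, f x ≠ x → f y ≠ y → dist (f x) (f y) = 0 := by
    intro x y hx hy
    rw [hfix x hx, hfix y hy, dist_self]
  refine ⟨⟨by rw [hφdef]; norm_num, ?_, ?_, ?_⟩, ?_, hdist0, ?_, ?_, hab⟩
  · intro t ht; rw [hφdef]; linarith
  · intro t ht; rw [hφdef]; linarith
  · intro ε hε
    exact ⟨ε, hε, fun t h1 h2 => by rw [hφdef]; linarith⟩
  · intro α β γ hα hβ hγ hsum x y hx hy
    rw [hdist0 x y hx hy]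
    have hnn : ∀ t : ℝ, 0 ≤ t → 0 ≤ φ t := fun t ht => by rw [hφdef]; linarith
    apply mul_nonneg
    apply mul_nonneg
    apply mul_nonneg
    · exact Real.rpow_nonneg (hnn _ Metric.diam_nonneg) _
    · exact Real.rpow_nonneg (hnn _ Metric.diam_nonneg) _
    · exact Real.rpow_nonneg (hnn _ Metric.diam_nonneg) _
    · apply Real.rpow_nonneg (hnn _ (by unfold Mf Df; positivity))
  · rw [hfdef]; simp
  · rw [hfdef]; simp [hab.symm]
end

section
/- Let X = ℕ \ {3} with the usual metric D(m,n) = |m − n|, let A = {n ∈ X : n ≡ 3 (mod 4) and n ≥ 7} = {7, 11, 15, ...}, and define f : X → X by f x = 2 if x ∈ A and f x = 1 otherwise. Define φ : [0,∞) → [0,∞) by φ(t) = 0 if t is an even integer and φ(t) = 5t/6 otherwise. Then φ ∈ Φ, f is a generalized contraction of type (II) with parameters α = β = γ = 0 and δ = 5/6 (i.e., D(fx, fy) ≤ (5/6) φ(M_f(x,y)) for all x, y ∈ X), and 1 is the unique fixed point of f. -/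
open Metric Filter

open scoped Classical

/-- on `X = ℕ \ {3}`, with `f x = 2` for `x ∈ A = {7, 11, 15, ...}`
and `f x = 1` otherwise, and `φ(t) = 0` for even integers `t`, `φ(t) = 5t/6`
otherwise: `φ ∈ Φ`, `f` is a generalized contraction of type (II) with
`α = β = γ = 0`, `δ = 5/6`, and `1` is the unique fixed point of `f`. -/
theorem example_typeII (f : {n : ℕ // n ≠ 3} → {n : ℕ // n ≠ 3})
    (hfdef : ∀ x, f x = if x.1 % 4 = 3 ∧ 7 ≤ x.1 then
      (⟨2, by decide⟩ : {n : ℕ // n ≠ 3}) else ⟨1, by decide⟩)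
    (φ : ℝ → ℝ)
    (hφdef : ∀ t, φ t = if ∃ k : ℤ, t = 2 * (k : ℝ) then 0 else 5 * t / 6) :
    MemPhi φ ∧
    (∀ x y, dist (f x) (f y) ≤ (5 / 6 : ℝ) * φ (Mf f x y)) ∧
    f ⟨1, by decide⟩ = ⟨1, by decide⟩ ∧
    (∀ z, f z = z → z = ⟨1, by decide⟩) := by
  set e1 : {n : ℕ // n ≠ 3} := ⟨1, by decide⟩ with he1
  set e2 : {n : ℕ // n ≠ 3} := ⟨2, by decide⟩ with he2
  -- distance formula
  have hdist : ∀ a b : {n : ℕ // n ≠ 3}, dist a b = |(a.1 : ℝ) - b.1| := by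
    intro a b; rw [Subtype.dist_eq, Nat.dist_eq]
  -- φ is in Φ
  have hphi : MemPhi φ := by
    refine ⟨?_, ?_, ?_, ?_⟩
    · rw [hφdef, if_pos ⟨0, by norm_num⟩]
    · intro t ht; rw [hφdef]; split_ifs <;> linarith
    · intro t ht; rw [hφdef]; split_ifs <;> linarith
    · intro ε hε
      refine ⟨ε / 5, by linarith, fun t h1 h2 => ?_⟩
      rw [hφdef]; split_ifs <;> linarith
  -- value of f
  have hfval : ∀ x : {n : ℕ // n ≠ 3}, f x = e2 ∨ f x = e1 := by
    intro x; rw [hfdef]; split_ifs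
    · exact Or.inl rfl
    · exact Or.inr rfl
  have hf1 : f e1 = e1 := by rw [hfdef]; norm_num
  have hf2 : f e2 = e1 := by rw [hfdef]; norm_num
  have hff : ∀ x, f (f x) = e1 := by
    intro x; rcases hfval x with h | h <;> rw [h] <;> [exact hf2; exact hf1]
  -- orbit description
  have horb : ∀ x, orbit f x = {x, f x, e1} := by
    intro x
    ext z
    constructor
    · rintro ⟨n, rfl⟩
      match n with
      | 0 => left; rfl
      | 1 => right; left; rfl
      | n + 2 =>
        right; right
        show f^[n + 2] x = e1
        rw [show n + 2 = 2 + n by ring, Function.iterate_add_apply]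
        exact hff _
    · rintro (rfl | rfl | rfl)
      · exact ⟨0, rfl⟩
      · exact ⟨1, rfl⟩
      · exact ⟨2, hff _⟩
  -- Df when x ∈ A
  have hDfA : ∀ x : {n : ℕ // n ≠ 3}, x.1 % 4 = 3 → 7 ≤ x.1 →
      Df f x = (x.1 : ℝ) - 1 := by
    intro x h4 h7
    have hx7 : (7 : ℝ) ≤ x.1 := by exact_mod_cast h7
    have hfx : f x = e2 := by rw [hfdef, if_pos ⟨h4, h7⟩]
    rw [Df, horb, hfx, Metric.diam_triple]
    simp only [hdist, he1, he2]
    norm_num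
    rw [abs_of_nonneg (by linarith), abs_of_nonneg (by linarith),
      max_eq_right (by linarith : (x.1:ℝ) - 2 ≤ (x.1:ℝ) - 1), max_eq_left (by linarith)]
  -- Df when x ∉ A
  have hDfB : ∀ x : {n : ℕ // n ≠ 3}, ¬(x.1 % 4 = 3 ∧ 7 ≤ x.1) →
      Df f x = |(x.1 : ℝ) - 1| := by
    intro x hx
    have hfx : f x = e1 := by rw [hfdef, if_neg hx]
    rw [Df, horb, hfx, Metric.diam_triple]
    simp only [hdist, he1]
    norm_num
  -- Mf nonneg
  have hMf0 : ∀ x y, 0 ≤ Mf f x y := by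
    intro x y
    have := Metric.diam_nonneg (s := orbit f x)
    have := Metric.diam_nonneg (s := orbit f y)
    rw [Mf]; unfold Df; linarith
  -- key asymmetric case
  have key : ∀ x y : {n : ℕ // n ≠ 3}, (x.1 % 4 = 3 ∧ 7 ≤ x.1) →
      ¬(y.1 % 4 = 3 ∧ 7 ≤ y.1) → dist (f x) (f y) ≤ (5 / 6 : ℝ) * φ (Mf f x y) := by
    intro x y hx hy
    have hfx : f x = e2 := by rw [hfdef, if_pos hx]
    have hfy : f y = e1 := by rw [hfdef, if_neg hy]
    have hd : dist (f x) (f y) = 1 := by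
      rw [hfx, hfy, hdist]; simp only [he1, he2]; norm_num
    have hm : Mf f x y = (((x.1 : ℝ) - 1) + |(y.1 : ℝ) - 1|) / 2 := by
      rw [Mf, hDfA x hx.1 hx.2, hDfB y hy]
    have hy4 : y.1 % 4 ≠ 3 := by
      intro h4
      have h7 : ¬ 7 ≤ y.1 := fun h => hy ⟨h4, h⟩
      have := y.2
      omega
    have hx7 : (7 : ℝ) ≤ x.1 := by exact_mod_cast hx.2
    have habs : (0 : ℝ) ≤ |(y.1 : ℝ) - 1| := abs_nonneg _
    have hm3 : (3 : ℝ) ≤ Mf f x y := by rw [hm]; linarith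
    have hodd : ¬ ∃ k : ℤ, Mf f x y = 2 * (k : ℝ) := by
      rintro ⟨k, hk⟩
      rw [hm] at hk
      rcases Nat.eq_zero_or_pos y.1 with hy0 | hy1
      · rw [hy0] at hk
        norm_num at hk
        have : (x.1 : ℝ) = 4 * k := by linarith
        have hxk : (x.1 : ℤ) = 4 * k := by exact_mod_cast this
        have := hx.1
        omega
      · have h1y : (1 : ℝ) ≤ y.1 := by exact_mod_cast hy1
        rw [abs_of_nonneg (by linarith)] at hk
        have : (x.1 : ℝ) + y.1 = 4 * k + 2 := by linarith
        have hxk : (x.1 : ℤ) + y.1 = 4 * k + 2 := by exact_mod_cast this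
        have := hx.1
        omega
    have hφm : φ (Mf f x y) = 5 * Mf f x y / 6 := by
      rw [hφdef, if_neg hodd]
    rw [hd, hφm]
    linarith
  refine ⟨hphi, ?_, hf1, ?_⟩
  · intro x y
    have hsym : Mf f x y = Mf f y x := by rw [Mf, Mf]; ring
    by_cases hx : x.1 % 4 = 3 ∧ 7 ≤ x.1 <;> by_cases hy : y.1 % 4 = 3 ∧ 7 ≤ y.1
    · have : f x = f y := by rw [hfdef, hfdef, if_pos hx, if_pos hy]
      rw [this, dist_self]
      have := hphi.2.1 (Mf f x y) (hMf0 x y)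
      linarith
    · exact key x y hx hy
    · rw [dist_comm, hsym]; exact key y x hy hx
    · have : f x = f y := by rw [hfdef, hfdef, if_neg hx, if_neg hy]
      rw [this, dist_self]
      have := hphi.2.1 (Mf f x y) (hMf0 x y)
      linarith
  · intro z hz
    rw [hfdef] at hz
    split_ifs at hz with h
    · exfalso
      have : z.1 = 2 := by rw [← hz]
      omega
    · exact hz.symm
end

section
/- Let X = ℕ \ {3} with the usual metric D(m,n) = |m − n|, let A = {n ∈ X : n ≡ 3 (mod 4) and n ≥ 7} = {7, 11, 15, ...}, and define f : X → X by f x = 2 if x ∈ A and f x = 1 otherwise. Define φ : [0,∞) → [0,∞) by φ(t) = 0 if t is an even integer and φ(t) = 5t/6 otherwise. Then f is a generalized contraction of type (III) with this φ; that is, D(fx, fy) ≤ max{φ(D_f(x)), φ(D_f(y)), φ(D_f(x,y)), φ(M_f(x,y))} for all x, y ∈ X. -/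
open Metric Filter

open scoped Classical

section Aux
variable {f : {n : ℕ // n ≠ 3} → {n : ℕ // n ≠ 3}}


lemma aux_ffz (hfdef : ∀ x, f x = if x.1 % 4 = 3 ∧ 7 ≤ x.1 then
      (⟨2, by decide⟩ : {n : ℕ // n ≠ 3}) else ⟨1, by decide⟩)
    (z : {n : ℕ // n ≠ 3}) : f (f z) = ⟨1, by decide⟩ := by
  rw [hfdef z]
  split_ifs with h <;> rw [hfdef] <;> simp

lemma aux_fone (hfdef : ∀ x, f x = if x.1 % 4 = 3 ∧ 7 ≤ x.1 then
      (⟨2, by decide⟩ : {n : ℕ // n ≠ 3}) else ⟨1, by decide⟩) :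
    f ⟨1, by decide⟩ = ⟨1, by decide⟩ := by
  rw [hfdef]; simp

lemma aux_orbit (hfdef : ∀ x, f x = if x.1 % 4 = 3 ∧ 7 ≤ x.1 then
      (⟨2, by decide⟩ : {n : ℕ // n ≠ 3}) else ⟨1, by decide⟩)
    (z : {n : ℕ // n ≠ 3}) :
    orbit f z = {z, f z, ⟨1, by decide⟩} := by
  ext w
  constructor
  · rintro ⟨n, rfl⟩
    match n with
    | 0 => left; rfl
    | 1 => right; left; rfl
    | (n+2) =>
      right; right
      show f^[n+2] z ∈ ({⟨1, by decide⟩} : Set _)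
      rw [Function.iterate_add_apply]
      have h2 : f^[2] z = ⟨1, by decide⟩ := aux_ffz hfdef z
      rw [h2, Function.iterate_fixed (aux_fone hfdef)]
      rfl
  · rintro (rfl | rfl | hw)
    · exact ⟨0, rfl⟩
    · exact ⟨1, rfl⟩
    · simp only [Set.mem_singleton_iff] at hw
      refine ⟨2, ?_⟩
      show f (f z) = w
      rw [hw]; exact aux_ffz hfdef z

lemma aux_key (hfdef : ∀ x, f x = if x.1 % 4 = 3 ∧ 7 ≤ x.1 then
      (⟨2, by decide⟩ : {n : ℕ // n ≠ 3}) else ⟨1, by decide⟩)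
    (φ : ℝ → ℝ)
    (hφdef : ∀ t, φ t = if ∃ k : ℤ, t = 2 * (k : ℝ) then 0 else 5 * t / 6)
    (x y : {n : ℕ // n ≠ 3}) (hx : x.1 % 4 = 3 ∧ 7 ≤ x.1)
    (hy : ¬(y.1 % 4 = 3 ∧ 7 ≤ y.1)) :
    dist (f x) (f y) ≤ φ (Mf f x y) := by
  obtain ⟨hx4, hx7⟩ := hx
  have ha : (7 : ℝ) ≤ (x.1 : ℝ) := by exact_mod_cast hx7
  have hfx : f x = ⟨2, by decide⟩ := by rw [hfdef]; simp [hx4, hx7]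
  have hfy : f y = ⟨1, by decide⟩ := by rw [hfdef]; exact if_neg hy
  have hDx : Df f x = (x.1 : ℝ) - 1 := by
    rw [Df, aux_orbit hfdef, hfx, Metric.diam_triple]
    rw [Subtype.dist_eq, Subtype.dist_eq, Subtype.dist_eq, Nat.dist_eq, Nat.dist_eq,
      Nat.dist_eq]
    push_cast
    rw [abs_of_nonneg (by linarith), abs_of_nonneg (by linarith),
      abs_of_nonneg (by norm_num)]
    have h1 : max ((x.1:ℝ)-2) ((x.1:ℝ)-1) = (x.1:ℝ)-1 := max_eq_right (by linarith)
    rw [h1, max_eq_left (by linarith)]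
  have hDy : Df f y = |(y.1 : ℝ) - 1| := by
    rw [Df, aux_orbit hfdef, hfy, Metric.diam_triple, dist_self, max_self,
      max_eq_left dist_nonneg, Subtype.dist_eq, Nat.dist_eq]
    norm_num
  have hdist : dist (f x) (f y) = 1 := by
    rw [hfx, hfy, Subtype.dist_eq, Nat.dist_eq]
    norm_num
  have hMf : Mf f x y = (((x.1 : ℝ) - 1) + |(y.1 : ℝ) - 1|) / 2 := by
    rw [Mf, hDx, hDy]
  rw [hdist, hφdef, hMf]
  split_ifs with h
  · exfalso
    obtain ⟨k, hk⟩ := h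
    rcases Nat.eq_zero_or_pos y.1 with hb | hb
    · rw [hb] at hk
      norm_num at hk
      have : (x.1 : ℝ) = 4 * k := by linarith
      have hZ : (x.1 : ℤ) = 4 * k := by exact_mod_cast this
      omega
    · have hb1 : (1 : ℝ) ≤ (y.1 : ℝ) := by exact_mod_cast hb
      rw [abs_of_nonneg (by linarith)] at hk
      have : (x.1 : ℝ) + (y.1 : ℝ) = 4 * k + 2 := by linarith
      have hZ : (x.1 : ℤ) + (y.1 : ℤ) = 4 * k + 2 := by exact_mod_cast this
      have hy3 : y.1 ≠ 3 := y.2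
      omega
  · have := abs_nonneg ((y.1 : ℝ) - 1)
    linarith

lemma aux_phi_nonneg (φ : ℝ → ℝ)
    (hφdef : ∀ t, φ t = if ∃ k : ℤ, t = 2 * (k : ℝ) then 0 else 5 * t / 6)
    {t : ℝ} (ht : 0 ≤ t) : 0 ≤ φ t := by
  rw [hφdef]; split_ifs <;> linarith

end Aux

/-- on `X = ℕ \ {3}`, with `f x = 2` for `x ∈ A = {7, 11, 15, ...}`
and `f x = 1` otherwise, and `φ(t) = 0` for even integers `t`, `φ(t) = 5t/6`
otherwise, `f` satisfies the type (III) contraction inequality with this `φ`. -/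

theorem example_typeIII (f : {n : ℕ // n ≠ 3} → {n : ℕ // n ≠ 3})
    (hfdef : ∀ x, f x = if x.1 % 4 = 3 ∧ 7 ≤ x.1 then
      (⟨2, by decide⟩ : {n : ℕ // n ≠ 3}) else ⟨1, by decide⟩)
    (φ : ℝ → ℝ)
    (hφdef : ∀ t, φ t = if ∃ k : ℤ, t = 2 * (k : ℝ) then 0 else 5 * t / 6) :
    ∀ x y, dist (f x) (f y) ≤
      max (max (φ (Df f x)) (φ (Df f y))) (max (φ (Df2 f x y)) (φ (Mf f x y))) := by
  intro x y
  have hMmax : φ (Mf f x y) ≤ max (max (φ (Df f x)) (φ (Df f y)))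
      (max (φ (Df2 f x y)) (φ (Mf f x y))) :=
    le_trans (le_max_right _ _) (le_max_right _ _)
  by_cases hx : x.1 % 4 = 3 ∧ 7 ≤ x.1 <;> by_cases hy : y.1 % 4 = 3 ∧ 7 ≤ y.1
  · have hfe : f x = f y := by rw [hfdef x, hfdef y, if_pos hx, if_pos hy]
    rw [hfe, dist_self]
    refine le_trans (aux_phi_nonneg φ hφdef (Metric.diam_nonneg (s := orbit f x ∪ orbit f y))) ?_
    exact le_trans (le_max_left (φ (Df2 f x y)) _) (le_max_right _ _)
  · exact le_trans (aux_key hfdef φ hφdef x y hx hy) hMmax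
  · rw [dist_comm]
    have hMc : Mf f y x = Mf f x y := by rw [Mf, Mf, add_comm]
    refine le_trans ?_ hMmax
    rw [← hMc]
    exact aux_key hfdef φ hφdef y x hy hx
  · have hfe : f x = f y := by rw [hfdef x, hfdef y, if_neg hx, if_neg hy]
    rw [hfe, dist_self]
    refine le_trans (aux_phi_nonneg φ hφdef (Metric.diam_nonneg (s := orbit f x ∪ orbit f y))) ?_
    exact le_trans (le_max_left (φ (Df2 f x y)) _) (le_max_right _ _)
end

section
/- Let X = ℕ \ {3} with the usual metric D(m,n) = |m − n|, let A = {n ∈ X : n ≡ 3 (mod 4) and n ≥ 7} = {7, 11, 15, ...}, and define f : X → X by f x = 2 if x ∈ A and f x = 1 otherwise. Define φ : [0,∞) → [0,∞) by φ(t) = 0 if t is an even integer and φ(t) = 5t/6 otherwise. Then f does NOT satisfy the Touail–Moutawakil contraction condition with this φ: for x = 7 and y = 1 one has D(f x, f y) = 1 while max{φ(D_f(x)), φ(D_f(y)), φ(D_f(x,y))} = 0, so D(fx, fy) > max{φ(D_f(x)), φ(D_f(y)), φ(D_f(x,y))}. -/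
open Metric Filter

open scoped Classical

/-- the same map `f` on `X = ℕ \ {3}` fails the Touail–Moutawakil
contraction condition with the same `φ`: for `x = 7`, `y = 1`, `D(fx,fy) = 1`
while `max{φ(D_f(x)), φ(D_f(y)), φ(D_f(x,y))} = 0`. -/
theorem example_not_TouailMoutawakil (f : {n : ℕ // n ≠ 3} → {n : ℕ // n ≠ 3})
    (hfdef : ∀ x, f x = if x.1 % 4 = 3 ∧ 7 ≤ x.1 then
      (⟨2, by decide⟩ : {n : ℕ // n ≠ 3}) else ⟨1, by decide⟩)
    (φ : ℝ → ℝ)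
    (hφdef : ∀ t, φ t = if ∃ k : ℤ, t = 2 * (k : ℝ) then 0 else 5 * t / 6) :
    dist (f ⟨7, by decide⟩) (f ⟨1, by decide⟩) = 1 ∧
    max (max (φ (Df f ⟨7, by decide⟩)) (φ (Df f ⟨1, by decide⟩)))
      (φ (Df2 f ⟨7, by decide⟩ ⟨1, by decide⟩)) = 0 ∧
    dist (f ⟨7, by decide⟩) (f ⟨1, by decide⟩) >
      max (max (φ (Df f ⟨7, by decide⟩)) (φ (Df f ⟨1, by decide⟩)))
        (φ (Df2 f ⟨7, by decide⟩ ⟨1, by decide⟩)) := by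
  have h7 : f ⟨7, by decide⟩ = ⟨2, by decide⟩ := by rw [hfdef]; norm_num
  have h2 : f ⟨2, by decide⟩ = ⟨1, by decide⟩ := by rw [hfdef]; norm_num
  have h1 : f ⟨1, by decide⟩ = ⟨1, by decide⟩ := by rw [hfdef]; norm_num
  have horb1 : orbit f ⟨1, by decide⟩ = {⟨1, by decide⟩} := by
    ext z
    simp only [orbit, Set.mem_range, Set.mem_singleton_iff]
    constructor
    · rintro ⟨n, rfl⟩; exact Function.iterate_fixed h1 n
    · rintro rfl; exact ⟨0, rfl⟩
  have horb7 : orbit f ⟨7, by decide⟩ =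
      {⟨7, by decide⟩, ⟨2, by decide⟩, ⟨1, by decide⟩} := by
    ext z
    simp only [orbit, Set.mem_range, Set.mem_insert_iff, Set.mem_singleton_iff]
    constructor
    · rintro ⟨n, rfl⟩
      match n with
      | 0 => left; rfl
      | 1 => right; left; simp [h7]
      | (m + 2) =>
        right; right
        have h2' : f^[2] (⟨7, by decide⟩ : {n : ℕ // n ≠ 3}) = ⟨1, by decide⟩ := by
          show f (f ⟨7, by decide⟩) = _
          rw [h7, h2]
        have : f^[m+2] (⟨7, by decide⟩ : {n : ℕ // n ≠ 3}) = f^[m] ⟨1, by decide⟩ := by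
          rw [Function.iterate_add_apply, h2']
        rw [this]
        exact Function.iterate_fixed h1 m
    · rintro (rfl | rfl | rfl)
      · exact ⟨0, rfl⟩
      · exact ⟨1, by simp [h7]⟩
      · exact ⟨2, by show f (f _) = _; rw [h7, h2]⟩
  have hd71 : dist (⟨7, by decide⟩ : {n : ℕ // n ≠ 3}) ⟨1, by decide⟩ = 6 := by
    rw [Subtype.dist_eq]; rw [Nat.dist_eq]; norm_num
  have hd72 : dist (⟨7, by decide⟩ : {n : ℕ // n ≠ 3}) ⟨2, by decide⟩ = 5 := by
    rw [Subtype.dist_eq]; rw [Nat.dist_eq]; norm_num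
  have hd21 : dist (⟨2, by decide⟩ : {n : ℕ // n ≠ 3}) ⟨1, by decide⟩ = 1 := by
    rw [Subtype.dist_eq]; rw [Nat.dist_eq]; norm_num
  have hDf7 : Df f ⟨7, by decide⟩ = 6 := by
    rw [Df, horb7, Metric.diam_triple, hd71, hd72, hd21]; norm_num
  have hDf1 : Df f ⟨1, by decide⟩ = 0 := by
    rw [Df, horb1, Metric.diam_singleton]
  have hDf2 : Df2 f ⟨7, by decide⟩ ⟨1, by decide⟩ = 6 := by
    rw [Df2, horb7, horb1]
    have : ({⟨7, by decide⟩, ⟨2, by decide⟩, ⟨1, by decide⟩} ∪ {⟨1, by decide⟩} :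
        Set {n : ℕ // n ≠ 3}) = {⟨7, by decide⟩, ⟨2, by decide⟩, ⟨1, by decide⟩} := by
      ext z; simp
    rw [this, Metric.diam_triple, hd71, hd72, hd21]; norm_num
  have hφ6 : φ 6 = 0 := by rw [hφdef, if_pos ⟨3, by norm_num⟩]
  have hφ0 : φ 0 = 0 := by rw [hφdef, if_pos ⟨0, by norm_num⟩]
  have hdist : dist (f ⟨7, by decide⟩) (f ⟨1, by decide⟩) = 1 := by
    rw [h7, h1, hd21]
  refine ⟨hdist, ?_, ?_⟩
  · rw [hDf7, hDf1, hDf2, hφ6, hφ0]; norm_num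
  · rw [hDf7, hDf1, hDf2, hφ6, hφ0, hdist]; norm_num
end
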